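/- The composite, in the homotopy-cospan category, of the comultiplication cospan ({*} → {*} ← {a,b}) with the multiplication cospan ({a,b} → {*} ← {*}) has apex homotopy equivalent to a circle; in particular it is not equal (up to homotopy) to the identity cospan. -/

import Mathlib

open unitInterval

/-- The double mapping cylinder (homotopy pushout) of the span `X ←f A →g Y`:
the quotient of `X ⊔ (A × [0,1]) ⊔ Y` identifying `(a,0)` with `f a` and `(a,1)` with `g a`. -/
def DMC {A X Y : Type*} [TopologicalSpace A] [TopologicalSpace X] [TopologicalSpace Y]
    (f : A → X) (g : A → Y) : Type _ :=
  Quot (fun p q : (X ⊕ A × I) ⊕ Y =>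
    (∃ a, p = Sum.inl (Sum.inr (a, 0)) ∧ q = Sum.inl (Sum.inl (f a))) ∨
    (∃ a, p = Sum.inl (Sum.inr (a, 1)) ∧ q = Sum.inr (g a)))

instance {A X Y : Type*} [TopologicalSpace A] [TopologicalSpace X] [TopologicalSpace Y]
    (f : A → X) (g : A → Y) : TopologicalSpace (DMC f g) :=
  instTopologicalSpaceQuot

/-- The canonical map `X → X ⊔ʰ_A Y`. -/
def DMC.inl {A X Y : Type*} [TopologicalSpace A] [TopologicalSpace X] [TopologicalSpace Y]
    {f : A → X} {g : A → Y} (x : X) : DMC f g :=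
  Quot.mk _ (Sum.inl (Sum.inl x))

/-- The canonical map `Y → X ⊔ʰ_A Y`. -/
def DMC.inr {A X Y : Type*} [TopologicalSpace A] [TopologicalSpace X] [TopologicalSpace Y]
    {f : A → X} {g : A → Y} (y : Y) : DMC f g :=
  Quot.mk _ (Sum.inr y)

/-- The wedge (bouquet) of circles indexed by `S`: glue the basepoint of each of `S` many
circles to one extra point. -/
def Bouquet (S : Type*) : Type _ :=
  Quot (fun p q : S × Circle ⊕ PUnit => ∃ s, p = Sum.inl (s, 1) ∧ q = Sum.inr PUnit.unit)

noncomputable instance (S : Type*) [TopologicalSpace S] : TopologicalSpace (Bouquet S) :=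
  instTopologicalSpaceQuot

/-! The double mapping cylinder of `pt ← {0, 1} → pt` is two intervals glued at both ends.
Sending them onto the two half-circles from `1` to `-1` is a continuous bijection from a compact
space onto the Hausdorff circle, hence a homeomorphism. The circle is not simply connected, so not
contractible: through the covering `Circle.exp : ℝ → S¹`, the loop `t ↦ exp (2πt)` lifts to a path
ending at `2π` and the constant loop to one ending at `0`, while lifts of loops homotopic rel
endpoints end at the same point. -/

open Function Set Real

namespace DMC

variable {A X Y : Type*} [TopologicalSpace A] [TopologicalSpace X] [TopologicalSpace Y]
  {f : A → X} {g : A → Y}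

def cyl (a : A) (t : I) : DMC f g :=
  Quot.mk _ (Sum.inl (Sum.inr (a, t)))

theorem cyl_zero (a : A) : (cyl a 0 : DMC f g) = DMC.inl (f a) :=
  Quot.sound (Or.inl ⟨a, rfl, rfl⟩)

theorem cyl_one (a : A) : (cyl a 1 : DMC f g) = DMC.inr (g a) :=
  Quot.sound (Or.inr ⟨a, rfl, rfl⟩)

theorem exists_eq_cyl (hf : Surjective f) (hg : Surjective g) (p : DMC f g) :
    ∃ a t, p = cyl a t := by
  induction p using Quot.ind with
  | mk p =>
    rcases p with (x | ⟨a, t⟩) | y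
    · obtain ⟨a, rfl⟩ := hf x
      exact ⟨a, 0, (cyl_zero a).symm⟩
    · exact ⟨a, t, rfl⟩
    · obtain ⟨a, rfl⟩ := hg y
      exact ⟨a, 1, (cyl_one a).symm⟩

variable {Z : Type*}

def lift (u : X → Z) (h : A × I → Z) (v : Y → Z)
    (h₀ : ∀ a, h (a, 0) = u (f a)) (h₁ : ∀ a, h (a, 1) = v (g a)) : DMC f g → Z :=
  Quot.lift (Sum.elim (Sum.elim u h) v) <| by
    rintro _ _ (⟨a, rfl, rfl⟩ | ⟨a, rfl, rfl⟩)
    exacts [h₀ a, h₁ a]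

theorem continuous_lift [TopologicalSpace Z] {u : X → Z} {h : A × I → Z} {v : Y → Z}
    {h₀ : ∀ a, h (a, 0) = u (f a)} {h₁ : ∀ a, h (a, 1) = v (g a)}
    (hu : Continuous u) (hh : Continuous h) (hv : Continuous v) :
    Continuous (lift u h v h₀ h₁) :=
  continuous_quot_lift _ ((hu.sumElim hh).sumElim hv)

instance [CompactSpace A] [CompactSpace X] [CompactSpace Y] : CompactSpace (DMC f g) :=
  Quot.compactSpace

section Suspension

variable [TopologicalSpace Z] {x y : Z}

-- With both legs constant, `DMC` is the unreduced suspension of `A`.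
def liftArcs (γ : A → Path x y) :
    DMC (fun _ : A => PUnit.unit) (fun _ : A => PUnit.unit) → Z :=
  lift (fun _ => x) (fun p => γ p.1 p.2) (fun _ => y) (fun a => (γ a).source)
    (fun a => (γ a).target)

theorem liftArcs_injective [Nonempty A] {γ : A → Path x y} (hinj : ∀ a, Injective (γ a))
    (hmeet : Pairwise fun a b => range (γ a) ∩ range (γ b) ⊆ {x, y}) :
    Injective (liftArcs γ) := by
  obtain ⟨a₀⟩ := ‹Nonempty A›
  intro p q hpq
  obtain ⟨a, t, rfl⟩ := exists_eq_cyl (fun _ => ⟨a₀, rfl⟩) (fun _ => ⟨a₀, rfl⟩) p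
  obtain ⟨b, s, rfl⟩ := exists_eq_cyl (fun _ => ⟨a₀, rfl⟩) (fun _ => ⟨a₀, rfl⟩) q
  change γ a t = γ b s at hpq
  rcases eq_or_ne a b with rfl | hab
  · rw [hinj a hpq]
  rcases hmeet hab ⟨⟨t, rfl⟩, ⟨s, hpq.symm⟩⟩ with hx | hy
  · rw [hinj a (hx.trans (γ a).source.symm), hinj b ((hpq.symm.trans hx).trans (γ b).source.symm),
      cyl_zero, cyl_zero]
  · rw [hinj a (hy.trans (γ a).target.symm), hinj b ((hpq.symm.trans hy).trans (γ b).target.symm),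
      cyl_one, cyl_one]

theorem liftArcs_surjective {γ : A → Path x y} (hcover : ∀ z, ∃ a, z ∈ range (γ a)) :
    Surjective (liftArcs γ) := fun z => by
  obtain ⟨a, t, rfl⟩ := hcover z
  exact ⟨cyl a t, rfl⟩

theorem continuous_liftArcs {γ : A → Path x y}
    (hγ : Continuous fun p : A × I => γ p.1 p.2) : Continuous (liftArcs γ) :=
  continuous_lift continuous_const hγ continuous_const

noncomputable def homeomorphOfArcs [CompactSpace A] [Nonempty A] [T2Space Z]
    (γ : A → Path x y) (hγ : Continuous fun p : A × I => γ p.1 p.2)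
    (hinj : ∀ a, Injective (γ a)) (hmeet : Pairwise fun a b => range (γ a) ∩ range (γ b) ⊆ {x, y})
    (hcover : ∀ z, ∃ a, z ∈ range (γ a)) :
    DMC (fun _ : A => PUnit.unit) (fun _ : A => PUnit.unit) ≃ₜ Z :=
  Continuous.homeoOfEquivCompactToT2
    (f := .ofBijective (liftArcs γ)
      ⟨liftArcs_injective hinj hmeet, liftArcs_surjective hcover⟩)
    (continuous_liftArcs hγ)

end Suspension

end DMC

namespace Circle

noncomputable def halfArcs : Fin 2 → Path (1 : Circle) (-1) :=
  ![path 1 (-1), (path (-1) 1).symm]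

theorem one_ne_neg_one : (1 : Circle) ≠ -1 :=
  (neg_ne_self 1).symm

theorem injective_halfArcs (a : Fin 2) : Injective (halfArcs a) := by
  fin_cases a
  · exact path_injective_of_ne one_ne_neg_one
  · exact (path_injective_of_ne one_ne_neg_one.symm).comp unitInterval.symm_involutive.injective

theorem range_halfArcs_zero : range (halfArcs 0) = range (path 1 (-1)) :=
  rfl

theorem range_halfArcs_one : range (halfArcs 1) = range (path (-1) 1) :=
  Path.symm_range _

theorem pairwise_range_halfArcs_inter :
    Pairwise fun a b => range (halfArcs a) ∩ range (halfArcs b) ⊆ {1, -1} := by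
  intro a b hab
  fin_cases a <;> fin_cases b
  all_goals simp only [Fin.zero_eta, Fin.mk_one, ne_eq, not_true_eq_false] at hab ⊢
  · rw [range_halfArcs_zero, range_halfArcs_one, range_path_inter_range_path one_ne_neg_one]
  · rw [range_halfArcs_zero, range_halfArcs_one, inter_comm,
      range_path_inter_range_path one_ne_neg_one]

theorem exists_mem_range_halfArcs (z : Circle) : ∃ a, z ∈ range (halfArcs a) := by
  rcases (range_path_union_range_path one_ne_neg_one).symm ▸ mem_univ z with h | h
  · exact ⟨0, h⟩
  · exact ⟨1, range_halfArcs_one ▸ h⟩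

theorem not_simplyConnectedSpace : ¬ SimplyConnectedSpace Circle := by
  intro
  let Γ := Path.segment (0 : ℝ) (2 * π)
  let loop : Path (1 : Circle) 1 := (Γ.map exp.continuous).cast (by simp) (by simp)
  have hloop : isCoveringMap_exp.liftPath loop.toContinuousMap 0 (by simp) = Γ.toContinuousMap :=
    ((isCoveringMap_exp.eq_liftPath_iff' _).mpr ⟨rfl, Γ.source⟩).symm
  have hrefl : isCoveringMap_exp.liftPath (Path.refl (1 : Circle)).toContinuousMap 0 (by simp) =
      .const I 0 :=
    isCoveringMap_exp.liftPath_const _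
  have hend := isCoveringMap_exp.liftPath_apply_one_eq_of_homotopicRel
    (SimplyConnectedSpace.paths_homotopic loop (Path.refl 1)) 0 (by simp) (by simp)
  rw [hloop, hrefl] at hend
  exact two_pi_pos.ne' (Γ.target.symm.trans hend)

end Circle

noncomputable def DMC.homeomorphCircle :
    DMC (fun _ : Fin 2 => PUnit.unit) (fun _ : Fin 2 => PUnit.unit) ≃ₜ Circle :=
  DMC.homeomorphOfArcs Circle.halfArcs
    (continuous_prod_of_discrete_left.mpr fun a => (Circle.halfArcs a).continuous)
    Circle.injective_halfArcs Circle.pairwise_range_halfArcs_inter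
    Circle.exists_mem_range_halfArcs

/-- The composite, in the homotopy-cospan category, of the comultiplication cospan
`{*} → {*} ← {a,b}` with the multiplication cospan `{a,b} → {*} ← {*}` is computed by the
homotopy pushout of `pt ← {a,b} → pt`; its apex is homotopy equivalent to a circle, and in
particular not homotopy equivalent to the apex `{*}` of the identity cospan. -/
theorem stmt7 :
    Nonempty
      (ContinuousMap.HomotopyEquiv
        (DMC (fun _ : Fin 2 => PUnit.unit) (fun _ : Fin 2 => PUnit.unit)) Circle) ∧
    ¬ Nonempty
      (ContinuousMap.HomotopyEquiv
        (DMC (fun _ : Fin 2 => PUnit.unit) (fun _ : Fin 2 => PUnit.unit)) PUnit) := by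
  refine ⟨⟨DMC.homeomorphCircle.toHomotopyEquiv⟩, fun ⟨c⟩ => ?_⟩
  exact Circle.not_simplyConnectedSpace
    (DMC.homeomorphCircle.symm.toHomotopyEquiv.trans c).simplyConnectedSpace
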